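/- arXiv:2401.03258 — 7 statements merged into one kernel-verified Lean document; each statement's English description precedes it below -/
import Mathlib

section
/- Let R be a UFD, 𝔪 a maximal ideal of R, and R̂ the 𝔪-adic completion of R, assumed to also be a UFD and such that the going-down property holds for R → R̂. If g is a greatest common divisor of elements a_1, …, a_n in R, then g is also a greatest common divisor of a_1, …, a_n in R̂. -/
/-!
Write `a i = g * b i`; then the `b i` have no common non-unit divisor in `R`. The completion of
the Noetherian ring `R` is flat, so `R → R̂` has going-down, and it is injective by Krull's
intersection theorem. If a prime `P` of `R̂` divided every `b i`, the contraction of `(P)` would be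
a nonzero prime of `R`, containing a prime element `π`. Going-down gives a nonzero prime of `R̂`
inside `(P)` lying over `(π)`; as `(P)` has height one this prime is `(P)` itself, so `π` divides
every `b i`, which is absurd. Hence the images of the `b i` are coprime in the UFD `R̂`, and
`gcd (g * b i) = g` there.
-/

open Ideal

theorem AdicCompletion.ne_top_of_nontrivial {R : Type*} [CommRing R] (I : Ideal R)
    [Nontrivial (AdicCompletion I R)] : I ≠ ⊤ := by
  rintro rfl
  have : IsHausdorff (⊤ : Ideal R) (AdicCompletion (⊤ : Ideal R) R) := inferInstance
  exact not_subsingleton _ this.subsingleton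

theorem AdicCompletion.algebraMap_injective {R : Type*} [CommRing R] [IsDomain R]
    [IsNoetherianRing R] {I : Ideal R} (hI : I ≠ ⊤) :
    Function.Injective (algebraMap R (AdicCompletion I R)) :=
  have := IsHausdorff.of_isDomain I hI
  AdicCompletion.of_injective I R

theorem Ideal.IsPrime.eq_span_singleton_of_le {S : Type*} [CommSemiring S]
    [UniqueFactorizationMonoid S] {Q : Ideal S} (hQ : Q.IsPrime) (hQ0 : Q ≠ ⊥) {P : S}
    (hP : Prime P) (hle : Q ≤ span {P}) : Q = span {P} := by
  obtain ⟨q, hqQ, hq⟩ := hQ.exists_mem_prime_of_ne_bot hQ0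
  have hqP : Associated q P := (hP.associated_of_dvd hq (mem_span_singleton.mp (hle hqQ))).symm
  exact le_antisymm hle ((span_singleton_le_iff_mem Q).mpr ((Q.mem_iff_of_associated hqP).mp hqQ))

theorem dvd_of_forall_dvd_mul {α ι : Type*} [CommMonoidWithZero α]
    [StrongNormalizedGCDMonoid α] [Fintype ι] {b : ι → α}
    (hb : ∀ d, (∀ i, d ∣ b i) → IsUnit d) {c x : α} (hc : ∀ i, c ∣ x * b i) : c ∣ x := by
  have hgcd : c ∣ Finset.univ.gcd fun i ↦ x * b i := Finset.dvd_gcd fun i _ ↦ hc i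
  rw [Finset.gcd_mul_left, (hb _ fun i ↦ Finset.gcd_dvd (Finset.mem_univ i)).dvd_mul_right] at hgcd
  exact hgcd.trans (normalize_associated x).dvd

section GoingDown

variable {R S : Type*} [CommRing R] [UniqueFactorizationMonoid R] [CommRing S]
  [UniqueFactorizationMonoid S] [Algebra R S] [Algebra.HasGoingDown R S]

theorem exists_prime_comap_span_singleton_eq (hinj : Function.Injective (algebraMap R S))
    {P : S} (hP : Prime P) (hne : (span {P}).comap (algebraMap R S) ≠ ⊥) :
    ∃ π : R, Prime π ∧ (span {P}).comap (algebraMap R S) = span {π} := by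
  have hQ : (span {P}).IsPrime := (span_singleton_prime hP.ne_zero).mpr hP
  obtain ⟨π, hπp, hπ⟩ := (hQ.comap (algebraMap R S)).exists_mem_prime_of_ne_bot hne
  have : (span {π}).IsPrime := (span_singleton_prime hπ.ne_zero).mpr hπ
  obtain ⟨Q', hQ'le, hQ', hQ'π⟩ := exists_ideal_le_liesOver_of_le (span {P})
    (p := span {π}) (q := (span {P}).under R) ((span_singleton_le_iff_mem _).mpr hπp)
  have hQ'0 : Q' ≠ ⊥ := by
    rintro rfl
    have hπ0 : span {π} = ⊥ := by rw [hQ'π.over, under, comap_bot_of_injective _ hinj]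
    exact hπ.ne_zero (span_singleton_eq_bot.mp hπ0)
  refine ⟨π, hπ, ?_⟩
  rw [← hQ'.eq_span_singleton_of_le hQ'0 hP hQ'le]
  exact hQ'π.over.symm

theorem isUnit_of_forall_dvd_algebraMap (hinj : Function.Injective (algebraMap R S))
    {ι : Type*} {b : ι → R} (hb0 : ∃ i, b i ≠ 0) (hb : ∀ d, (∀ i, d ∣ b i) → IsUnit d)
    {c : S} (hc : ∀ i, c ∣ algebraMap R S (b i)) : IsUnit c := by
  obtain ⟨i₀, hi₀⟩ := hb0
  have hc0 : c ≠ 0 := by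
    rintro rfl
    exact hi₀ (hinj (by simpa using hc i₀))
  by_contra hcu
  obtain ⟨P, hPirr, hPc⟩ := WfDvdMonoid.exists_irreducible_factor hcu hc0
  have hP : Prime P := UniqueFactorizationMonoid.irreducible_iff_prime.mp hPirr
  have hbP : ∀ i, b i ∈ (span {P}).comap (algebraMap R S) := fun i ↦
    mem_span_singleton.mpr (hPc.trans (hc i))
  have hne : (span {P}).comap (algebraMap R S) ≠ ⊥ := fun h ↦
    hi₀ (by simpa [h] using hbP i₀)
  obtain ⟨π, hπ, hπP⟩ := exists_prime_comap_span_singleton_eq hinj hP hne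
  exact hπ.not_isUnit (hb π fun i ↦ mem_span_singleton.mp (hπP ▸ hbP i))

theorem dvd_algebraMap_of_forall_dvd [Nontrivial R] (hinj : Function.Injective (algebraMap R S))
    {ι : Type*} [Fintype ι] {a : ι → R} {g : R}
    (hdvd : ∀ i, g ∣ a i) (hgcd : ∀ c, (∀ i, c ∣ a i) → c ∣ g)
    {c : S} (hc : ∀ i, c ∣ algebraMap R S (a i)) : c ∣ algebraMap R S g := by
  rcases eq_or_ne g 0 with rfl | hg
  · simp
  choose b hb using hdvd
  have hbu : ∀ d, (∀ i, d ∣ b i) → IsUnit d := fun d hd ↦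
    isUnit_of_dvd_one <| (mul_dvd_mul_iff_left hg).mp <| by
      simpa using hgcd (g * d) fun i ↦ hb i ▸ mul_dvd_mul_left g (hd i)
  have hb0 : ∃ i, b i ≠ 0 := by
    by_contra! h
    exact not_isUnit_zero (hbu 0 fun i ↦ (h i).symm ▸ dvd_rfl)
  let := UniqueFactorizationMonoid.strongNormalizationMonoid (α := S)
  let := UniqueFactorizationMonoid.toStrongNormalizedGCDMonoid S
  refine dvd_of_forall_dvd_mul (b := fun i ↦ algebraMap R S (b i))
    (fun d hd ↦ isUnit_of_forall_dvd_algebraMap hinj hb0 hbu hd) fun i ↦ ?_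
  rw [← map_mul, ← hb i]
  exact hc i

end GoingDown

theorem stmt_6_general (R : Type*) [CommRing R] [IsDomain R] [IsNoetherianRing R]
    [UniqueFactorizationMonoid R]
    (𝔪 : Ideal R)
    [IsDomain (AdicCompletion 𝔪 R)]
    [UniqueFactorizationMonoid (AdicCompletion 𝔪 R)]
    {n : ℕ} (a : Fin n → R) (g : R)
    (hdvd : ∀ i, g ∣ a i) (hmax' : ∀ c : R, (∀ i, c ∣ a i) → c ∣ g) :
    (∀ i, algebraMap R (AdicCompletion 𝔪 R) g ∣ algebraMap R (AdicCompletion 𝔪 R) (a i)) ∧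
    ∀ c : AdicCompletion 𝔪 R,
      (∀ i, c ∣ algebraMap R (AdicCompletion 𝔪 R) (a i)) →
      c ∣ algebraMap R (AdicCompletion 𝔪 R) g := by
  refine ⟨fun i ↦ map_dvd _ (hdvd i), fun c ↦ ?_⟩
  -- going-down for `R → R̂` is inferred from `AdicCompletion.flat_of_isNoetherian`
  exact dvd_algebraMap_of_forall_dvd
    (AdicCompletion.algebraMap_injective (AdicCompletion.ne_top_of_nontrivial 𝔪)) hdvd hmax'

/-- Let `R` be a (Noetherian) UFD, `𝔪` a maximal ideal of `R`, and `R̂` the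
`𝔪`-adic completion of `R`, assumed to be a domain which is itself a UFD and
such that the going-down property holds for `R → R̂`.  If `g` is a greatest
common divisor of elements `a_1, …, a_n` of `R`, then (the image of) `g` is also
a greatest common divisor of (the images of) `a_1, …, a_n` in `R̂`. -/
theorem stmt_6 (R : Type*) [CommRing R] [IsDomain R] [IsNoetherianRing R]
    [UniqueFactorizationMonoid R]
    (𝔪 : Ideal R) (hmax : 𝔪.IsMaximal)
    [IsDomain (AdicCompletion 𝔪 R)]
    [UniqueFactorizationMonoid (AdicCompletion 𝔪 R)]
    -- going-down for `R → R̂`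
    (hGD : ∀ (p q : Ideal R), p.IsPrime → q.IsPrime → p ≤ q →
      ∀ Q : Ideal (AdicCompletion 𝔪 R), Q.IsPrime →
        Q.comap (algebraMap R (AdicCompletion 𝔪 R)) = q →
        ∃ P : Ideal (AdicCompletion 𝔪 R), P.IsPrime ∧ P ≤ Q ∧
          P.comap (algebraMap R (AdicCompletion 𝔪 R)) = p)
    {n : ℕ} (a : Fin n → R) (g : R)
    (hdvd : ∀ i, g ∣ a i) (hmax' : ∀ c : R, (∀ i, c ∣ a i) → c ∣ g) :
    (∀ i, algebraMap R (AdicCompletion 𝔪 R) g ∣ algebraMap R (AdicCompletion 𝔪 R) (a i)) ∧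
    ∀ c : AdicCompletion 𝔪 R,
      (∀ i, c ∣ algebraMap R (AdicCompletion 𝔪 R) (a i)) →
      c ∣ algebraMap R (AdicCompletion 𝔪 R) g :=
  stmt_6_general R 𝔪 a g hdvd hmax'
end

section
/- Let G be a group, N an abelian normal subgroup with G/N free abelian of rank d with basis images t_1, …, t_d of elements x_1, …, x_d ∈ G. Regard N as a ℤ[t_1^{±1},…,t_d^{±1}]-module via conjugation: t_i·y = x_i y x_i^{−1}. Then for all n ≥ 1 and indices i, j, the commutator [x_i^n, x_j^n] equals 𝒯_n(t_i)·𝒯_n(t_j)·[x_i, x_j], where 𝒯_n(t) = 1 + t + ⋯ + t^{n−1}. -/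
/-!
Expanding `⁅g, h ^ (m + 1)⁆` and `⁅g ^ (m + 1), h⁆` one factor at a time writes `⁅g ^ m, h ^ n⁆`,
in any group, as an ordered product of the `m n` conjugates `(g ^ a h ^ b) ⁅g, h⁆ (g ^ a h ^ b)⁻¹`.
Once these conjugates commute the order is immaterial, and in module notation the product is
`𝒯_m(t_i) 𝒯_n(t_j) · ⁅g, h⁆`.
-/

open scoped commutatorElement

section
variable {G : Type*} [Group G]

theorem commutatorElement_pow_succ_right (g h : G) (m : ℕ) :
    ⁅g, h ^ (m + 1)⁆ = ⁅g, h ^ m⁆ * MulAut.conj (h ^ m) ⁅g, h⁆ := by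
  simp only [commutatorElement_def, MulAut.conj_apply, pow_succ]
  group

theorem commutatorElement_pow_succ_left (g h : G) (m : ℕ) :
    ⁅g ^ (m + 1), h⁆ = MulAut.conj (g ^ m) ⁅g, h⁆ * ⁅g ^ m, h⁆ := by
  simp only [commutatorElement_def, MulAut.conj_apply, pow_succ]
  group

theorem commutatorElement_pow_right (g h : G) (m : ℕ) :
    ⁅g, h ^ m⁆ = ((List.range m).map fun b => MulAut.conj (h ^ b) ⁅g, h⁆).prod := by
  induction m with
  | zero => simp
  | succ m ih =>
    rw [commutatorElement_pow_succ_right, ih, List.range_succ, List.map_append, List.prod_append,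
      List.map_singleton, List.prod_singleton]

theorem commutatorElement_pow_left (g h : G) (m : ℕ) :
    ⁅g ^ m, h⁆ = ((List.range m).reverse.map fun a => MulAut.conj (g ^ a) ⁅g, h⁆).prod := by
  induction m with
  | zero => simp
  | succ m ih =>
    rw [commutatorElement_pow_succ_left, ih, List.range_succ, List.reverse_append,
      List.map_append, List.prod_append, List.reverse_singleton, List.map_singleton,
      List.prod_singleton]

theorem List.prod_map_conj_prod_map_conj {α β : Type*} (u : α → G) (v : β → G) (c : G)
    (l₁ : List α) (l₂ : List β) :
    (l₁.map fun a => MulAut.conj (u a) (l₂.map fun b => MulAut.conj (v b) c).prod).prod =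
      ((l₁ ×ˢ l₂).map fun p => MulAut.conj (u p.1 * v p.2) c).prod := by
  induction l₁ with
  | nil => simp
  | cons a l ih =>
    rw [List.map_cons, List.prod_cons, List.product_cons, List.map_append, List.prod_append, ih,
      map_list_prod, List.map_map, List.map_map]
    simp only [Function.comp_def, map_mul, MulAut.mul_apply]

theorem commutatorElement_pow_pow (g h : G) (m n : ℕ) :
    ⁅g ^ m, h ^ n⁆ =
      (((List.range m).reverse ×ˢ List.range n).map
        fun p => MulAut.conj (g ^ p.1 * h ^ p.2) ⁅g, h⁆).prod := by
  rw [commutatorElement_pow_left]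
  simp only [← List.prod_map_conj_prod_map_conj, commutatorElement_pow_right]

end

theorem Finset.noncommProd_eq_list_prod {α β : Type*} [Monoid β] [DecidableEq α]
    {s : Finset α} {l : List α} (hl : l.Nodup) (hs : ∀ a, a ∈ l ↔ a ∈ s) (f : α → β) (comm) :
    s.noncommProd f comm = (l.map f).prod := by
  obtain rfl : s = l.toFinset := by ext a; simp [hs]
  exact Finset.noncommProd_toFinset l f comm hl

theorem stmt_8_general {G : Type*} [Group G]
    {d : ℕ} (x : Fin d → G)
    (n : ℕ) (i j : Fin d)
    (hcomm : ((Finset.range n ×ˢ Finset.range n : Finset (ℕ × ℕ)) : Set (ℕ × ℕ)).Pairwise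
      fun a b => Commute
        (((x i) ^ a.1 * (x j) ^ a.2) * ⁅x i, x j⁆ * ((x i) ^ a.1 * (x j) ^ a.2)⁻¹)
        (((x i) ^ b.1 * (x j) ^ b.2) * ⁅x i, x j⁆ * ((x i) ^ b.1 * (x j) ^ b.2)⁻¹)) :
    ⁅(x i) ^ n, (x j) ^ n⁆ =
      (Finset.range n ×ˢ Finset.range n).noncommProd
        (fun a => ((x i) ^ a.1 * (x j) ^ a.2) * ⁅x i, x j⁆ * ((x i) ^ a.1 * (x j) ^ a.2)⁻¹)
        hcomm := by
  have hnodup : ((List.range n).reverse ×ˢ List.range n).Nodup :=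
    (List.nodup_reverse.mpr List.nodup_range).product List.nodup_range
  have hmem : ∀ p, p ∈ (List.range n).reverse ×ˢ List.range n ↔
      p ∈ Finset.range n ×ˢ Finset.range n := by
    simp
  rw [commutatorElement_pow_pow, Finset.noncommProd_eq_list_prod hnodup hmem]
  rfl

/-- Let `G` be a group and `N` an abelian normal subgroup such that the elements
`x 1, …, x d` of `G` have pairwise commutators in `N`.  Regarding `N` as a module
over `ℤ[t₁^{±1},…,t_d^{±1}]` with `t_i` acting by conjugation `y ↦ x_i y x_i⁻¹`,
the identity `[x_i^n, x_j^n] = 𝒯_n(t_i)·𝒯_n(t_j)·[x_i, x_j]` with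
`𝒯_n(t) = 1 + t + ⋯ + t^{n-1}` reads, purely group-theoretically:
`⁅x_i^n, x_j^n⁆ = ∏_{a<n} ∏_{b<n} (x_i^a x_j^b) ⁅x_i, x_j⁆ (x_i^a x_j^b)⁻¹`
(the factors lie in the abelian subgroup `N`, hence pairwise commute, and the
product is taken as a `noncommProd`). -/
theorem stmt_8 {G : Type*} [Group G] (N : Subgroup G) (hN : N.Normal)
    (habel : ∀ a ∈ N, ∀ b ∈ N, a * b = b * a)
    {d : ℕ} (x : Fin d → G) (hx : ∀ i j : Fin d, ⁅x i, x j⁆ ∈ N)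
    (n : ℕ) (i j : Fin d)
    (hcomm : ((Finset.range n ×ˢ Finset.range n : Finset (ℕ × ℕ)) : Set (ℕ × ℕ)).Pairwise
      fun a b => Commute
        (((x i) ^ a.1 * (x j) ^ a.2) * ⁅x i, x j⁆ * ((x i) ^ a.1 * (x j) ^ a.2)⁻¹)
        (((x i) ^ b.1 * (x j) ^ b.2) * ⁅x i, x j⁆ * ((x i) ^ b.1 * (x j) ^ b.2)⁻¹)) :
    ⁅(x i) ^ n, (x j) ^ n⁆ =
      (Finset.range n ×ˢ Finset.range n).noncommProd
        (fun a => ((x i) ^ a.1 * (x j) ^ a.2) * ⁅x i, x j⁆ * ((x i) ^ a.1 * (x j) ^ a.2)⁻¹)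
        hcomm :=
  stmt_8_general x n i j hcomm
end

section
/- Let G be a group, N an abelian normal subgroup with G/N free abelian with basis images of x_1, …, x_d, and regard N as a module over ℤ[t_1^{±1},…,t_d^{±1}] via conjugation. Set c_{ij} = [x_i, x_j] ∈ N. Then for all distinct i, j, k: (t_i − 1)c_{jk} + (t_j − 1)c_{ki} + (t_k − 1)c_{ij} = 0 in N. -/
/-!
The Hall–Witt identity can be written as
`⁅a b a⁻¹, ⁅c, a⁆⁆ ⁅c a c⁻¹, ⁅b, c⁆⁆ ⁅b c b⁻¹, ⁅a, b⁆⁆ = 1`.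
Since `a b a⁻¹ = ⁅a, b⁆ b` and commutation with an element of the abelian normal subgroup `N`
only sees its argument modulo `N`, the three conjugates may be replaced by `b`, `a`, `c`.
The two leading factors then lie in `N`, so they commute and the cyclic order is restored.
-/

open scoped commutatorElement

namespace Subgroup

variable {G : Type*} [Group G] {N : Subgroup G}

theorem commutatorElement_mem_of_mem_right (hN : N.Normal) (g : G) {m : G} (hm : m ∈ N) :
    ⁅g, m⁆ ∈ N := by
  rw [commutatorElement_def]
  exact N.mul_mem (hN.conj_mem m hm g) (N.inv_mem hm)

theorem commutatorElement_mul_left_of_mem (hN : N.Normal)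
    (habel : ∀ a ∈ N, ∀ b ∈ N, a * b = b * a) (g : G) {n m : G} (hn : n ∈ N) (hm : m ∈ N) :
    ⁅n * g, m⁆ = ⁅g, m⁆ := by
  have hgm : ⁅g, m⁆ ∈ N := commutatorElement_mem_of_mem_right hN g hm
  have hnm : ⁅n, m⁆ = 1 := commutatorElement_eq_one_iff_mul_comm.mpr (habel n hn m hm)
  rw [commutatorElement_mul_left_eq_conj_mul, hnm, mul_one, habel n hn _ hgm,
    mul_inv_cancel_right]

theorem commutatorElement_commutatorElement_mul_eq_one_of_mem (hN : N.Normal)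
    (habel : ∀ a ∈ N, ∀ b ∈ N, a * b = b * a) {a b c : G}
    (hab : ⁅a, b⁆ ∈ N) (hbc : ⁅b, c⁆ ∈ N) (hca : ⁅c, a⁆ ∈ N) :
    ⁅a, ⁅b, c⁆⁆ * ⁅b, ⁅c, a⁆⁆ * ⁅c, ⁅a, b⁆⁆ = 1 := by
  have hconj : ∀ g h : G, g * h * g⁻¹ = ⁅g, h⁆ * h := fun g h => by
    rw [commutatorElement_def, inv_mul_cancel_right]
  have hallWitt := commutatorElement_conj_commutatorElement_mul a b c
  rw [hconj, hconj, hconj, commutatorElement_mul_left_of_mem hN habel b hab hca,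
    commutatorElement_mul_left_of_mem hN habel a hca hbc,
    commutatorElement_mul_left_of_mem hN habel c hbc hab] at hallWitt
  rwa [habel _ (commutatorElement_mem_of_mem_right hN b hca) _
    (commutatorElement_mem_of_mem_right hN a hbc)] at hallWitt

end Subgroup

theorem stmt_9_general {G : Type*} [Group G] (N : Subgroup G) (hN : N.Normal)
    (habel : ∀ a ∈ N, ∀ b ∈ N, a * b = b * a)
    {d : ℕ} (x : Fin d → G) (hx : ∀ i j : Fin d, ⁅x i, x j⁆ ∈ N)
    (i j k : Fin d) :
    ⁅x i, ⁅x j, x k⁆⁆ * ⁅x j, ⁅x k, x i⁆⁆ * ⁅x k, ⁅x i, x j⁆⁆ = 1 :=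
  Subgroup.commutatorElement_commutatorElement_mul_eq_one_of_mem hN habel
    (hx i j) (hx j k) (hx k i)

/-- Let `G` be a group and `N` an abelian normal subgroup such that the commutators
`c_{ij} = [x_i, x_j]` of the elements `x 1, …, x d` of `G` all lie in `N`.
Regarding `N` as a module over `ℤ[t₁^{±1},…,t_d^{±1}]` with `t_i` acting by
conjugation by `x_i`, the relation
`(t_i − 1)c_{jk} + (t_j − 1)c_{ki} + (t_k − 1)c_{ij} = 0` reads, purely
group-theoretically (noting `(t − 1)·c = ⁅x, c⁆` multiplicatively):
`⁅x_i, ⁅x_j, x_k⁆⁆ · ⁅x_j, ⁅x_k, x_i⁆⁆ · ⁅x_k, ⁅x_i, x_j⁆⁆ = 1` for distinct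
`i, j, k`. -/
theorem stmt_9 {G : Type*} [Group G] (N : Subgroup G) (hN : N.Normal)
    (habel : ∀ a ∈ N, ∀ b ∈ N, a * b = b * a)
    {d : ℕ} (x : Fin d → G) (hx : ∀ i j : Fin d, ⁅x i, x j⁆ ∈ N)
    (i j k : Fin d) (hij : i ≠ j) (hjk : j ≠ k) (hik : i ≠ k) :
    ⁅x i, ⁅x j, x k⁆⁆ * ⁅x j, ⁅x k, x i⁆⁆ * ⁅x k, ⁅x i, x j⁆⁆ = 1 :=
  stmt_9_general N hN habel x hx i j k
end

section
/- Let G be a group with a surjective homomorphism 𝒫: G → ℤ^d with abelian kernel N, let 𝒵 ≤ ℤ^d be a subgroup isomorphic to ℤ^{d'} with basis t'_1, …, t'_{d'}, and let H = 𝒫^{−1}(𝒵). Let x'_1, …, x'_{d'} be lifts of the t'_i, let I ⊆ ℤ[t_1^{±1},…,t_d^{±1}] be the ideal generated by t'_1 − 1, …, t'_{d'} − 1, and let C be the submodule of N generated by the commutators [x'_i, x'_j] (i < j). Then the commutator subgroup [H, H] equals C + I·N, and there is a short exact sequence 0 → N/(C + IN) → H^{ab} → ℤ^{d'} → 0 of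 abelian groups. -/
open scoped commutatorElement

open Subgroup

/-!
Modulo `C + I·N` the lifts `x'_i` commute with each other and with `N`, and `N` is abelian; since
`H` is generated by the `x'_i` together with `N`, the quotient `H/(C + I·N)` is abelian, so
`[H, H] ≤ C + I·N`. Conversely every generator of `C + I·N` is a commutator of elements of `H`
(or a conjugate of one). The exact sequence is then read off from `C + I·N ≤ N = ker P`.
-/

theorem Subgroup.commute_of_closure_eq_top {Q : Type*} [Group Q] {T : Set Q}
    (hT : closure T = ⊤) (hcomm : ∀ a ∈ T, ∀ b ∈ T, Commute a b) (x y : Q) : Commute x y := by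
  have hcenter : closure T ≤ center Q := (closure_le _).2 fun a ha => by
    rw [SetLike.mem_coe, ← centralizer_univ, ← coe_top, ← hT, centralizer_closure]
    exact fun b hb => (hcomm b hb a ha).eq
  rw [hT] at hcenter
  exact mem_center_iff.1 (hcenter (mem_top y)) x

theorem Subgroup.commutator_le_of_closure_eq {G : Type*} [Group G] {s : Set G}
    {K M : Subgroup G} (hK : closure s = K) [(M.subgroupOf K).Normal]
    (hs : ∀ a ∈ s, ∀ b ∈ s, ⁅a, b⁆ ∈ M) : ⁅K, K⁆ ≤ M := by
  subst hK
  set f := QuotientGroup.mk' (M.subgroupOf (closure s))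
  have hf (a b : closure s) : Commute (f a) (f b) ↔ ((⁅a, b⁆ : closure s) : G) ∈ M := by
    rw [← commutatorElement_eq_one_iff_commute, ← map_commutatorElement,
      QuotientGroup.mk'_apply, QuotientGroup.eq_one_iff, mem_subgroupOf]
  have hT : closure (f '' ((↑) ⁻¹' s)) = ⊤ := by
    rw [← MonoidHom.map_closure, closure_closure_coe_preimage, ← MonoidHom.range_eq_map,
      QuotientGroup.range_mk']
  have hcomm := commute_of_closure_eq_top hT <| by
    rintro _ ⟨a, ha, rfl⟩ _ ⟨b, hb, rfl⟩
    exact (hf a b).2 (hs a ha b hb)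
  rw [commutator_le]
  exact fun a ha b hb => (hf ⟨a, ha⟩ ⟨b, hb⟩).1 (hcomm _ _)

theorem Subgroup.comap_closure_image {G A : Type*} [Group G] [Group A] (f : G →* A)
    (s : Set G) : (closure (f '' s)).comap f = closure (s ∪ f.ker) := by
  rw [← MonoidHom.map_closure, comap_map_eq, closure_union, closure_eq]

section QuotientSubgroupOf

variable {G A : Type*} [Group G] [Group A] {N H M : Subgroup G} [(M.subgroupOf N).Normal]
  [(M.subgroupOf H).Normal]

theorem QuotientGroup.quotientMapSubgroupOfOfLe_injective (hNH : N ≤ H) :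
    Function.Injective (QuotientGroup.quotientMapSubgroupOfOfLe (le_refl M) hNH) := by
  rw [injective_iff_map_eq_one]
  intro z
  refine QuotientGroup.induction_on z fun y hy => ?_
  rw [QuotientGroup.quotientMapSubgroupOfOfLe_mk, QuotientGroup.eq_one_iff] at hy
  exact (QuotientGroup.eq_one_iff y).2 hy

def QuotientGroup.liftSubgroupOf (f : G →* A) (H M : Subgroup G) [(M.subgroupOf H).Normal]
    (hM : M ≤ f.ker) : H ⧸ M.subgroupOf H →* A :=
  QuotientGroup.lift _ (f.comp H.subtype) fun _ hh => hM hh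

theorem QuotientGroup.range_quotientMapSubgroupOfOfLe (f : G →* A) (hker : f.ker ≤ H)
    [(M.subgroupOf f.ker).Normal] (hM : M ≤ f.ker) :
    (QuotientGroup.quotientMapSubgroupOfOfLe (le_refl M) hker).range =
      (QuotientGroup.liftSubgroupOf f H M hM).ker := by
  ext z
  constructor
  · rintro ⟨w, rfl⟩
    exact QuotientGroup.induction_on w fun y => y.2
  · exact QuotientGroup.induction_on z fun h hh => ⟨QuotientGroup.mk ⟨h, hh⟩, rfl⟩

theorem QuotientGroup.range_liftSubgroupOf (f : G →* A) (hM : M ≤ f.ker) :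
    (QuotientGroup.liftSubgroupOf f H M hM).range = H.map f := by
  ext a
  constructor
  · rintro ⟨w, rfl⟩
    exact QuotientGroup.induction_on w fun h => ⟨h, h.2, rfl⟩
  · rintro ⟨g, hg, rfl⟩
    exact ⟨QuotientGroup.mk ⟨g, hg⟩, rfl⟩

end QuotientSubgroupOf

section LiftRelators

variable {G A ι : Type*} [Group G]

/-- The conjugates of the `[x'_i, x'_j]` (`i < j`), which generate `C` as a `Λ_ℤ`-module, together
with the elements `(t'_i − 1)·y = [x'_i, y]` (`y ∈ N`), which generate `I·N`. -/
def liftRelators [LT ι] [Group A] (P : G →* A) (x' : ι → G) : Set G :=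
  {g | ∃ i j : ι, ∃ w : G, i < j ∧ g = w * ⁅x' i, x' j⁆ * w⁻¹} ∪
    {g | ∃ (i : ι) (y : G), y ∈ P.ker ∧ g = ⁅x' i, y⁆}

theorem commutatorElement_mem_closure_liftRelators [LinearOrder ι] [Group A] (P : G →* A)
    (x' : ι → G) (habel : ∀ a ∈ P.ker, ∀ b ∈ P.ker, a * b = b * a) :
    ∀ a ∈ Set.range x' ∪ P.ker, ∀ b ∈ Set.range x' ∪ P.ker,
      ⁅a, b⁆ ∈ closure (liftRelators P x') := by
  have hlift (i j : ι) (hij : i < j) : ⁅x' i, x' j⁆ ∈ closure (liftRelators P x') :=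
    subset_closure (Or.inl ⟨i, j, 1, hij, by group⟩)
  have hker (i : ι) (y : G) (hy : y ∈ P.ker) : ⁅x' i, y⁆ ∈ closure (liftRelators P x') :=
    subset_closure (Or.inr ⟨i, y, hy, rfl⟩)
  rintro _ (⟨i, rfl⟩ | ha) _ (⟨j, rfl⟩ | hb)
  · rcases lt_trichotomy i j with hij | rfl | hji
    · exact hlift i j hij
    · rw [commutatorElement_self]
      exact one_mem _
    · rw [← commutatorElement_inv]
      exact inv_mem (hlift j i hji)
  · exact hker i _ hb
  · rw [← commutatorElement_inv]
    exact inv_mem (hker j _ ha)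
  · rw [commutatorElement_eq_one_iff_mul_comm.2 (habel _ ha _ hb)]
    exact one_mem _

theorem closure_liftRelators_le_ker [LT ι] [CommGroup A] (P : G →* A) (x' : ι → G) :
    closure (liftRelators P x') ≤ P.ker := by
  refine (closure_le _).2 fun g hg => Abelianization.commutator_subset_ker P ?_
  rcases hg with ⟨i, j, w, -, rfl⟩ | ⟨i, y, -, rfl⟩
  · exact Normal.conj_mem inferInstance _ (commutator_mem_commutator (mem_top _) (mem_top _)) w
  · exact commutator_mem_commutator (mem_top _) (mem_top _)

theorem closure_liftRelators_le_commutator [LT ι] [Group A] (P : G →* A) (x' : ι → G)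
    {H : Subgroup G} [H.Normal] (hx' : ∀ i, x' i ∈ H)
    (hNH : P.ker ≤ H) : closure (liftRelators P x') ≤ ⁅H, H⁆ := by
  refine (closure_le _).2 ?_
  rintro g (⟨i, j, w, -, rfl⟩ | ⟨i, y, hy, rfl⟩)
  · exact Normal.conj_mem inferInstance _ (commutator_mem_commutator (hx' i) (hx' j)) w
  · exact commutator_mem_commutator (hx' i) (hNH hy)

end LiftRelators

theorem stmt_10_general {G : Type*} [Group G] {d d' : ℕ}
    (P : G →* Multiplicative (Fin d → ℤ))
    (habel : ∀ a ∈ P.ker, ∀ b ∈ P.ker, a * b = b * a)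
    (Z : Subgroup (Multiplicative (Fin d → ℤ)))
    (t' : Fin d' → Multiplicative (Fin d → ℤ))
    (ht' : Subgroup.closure (Set.range t') = Z)
    (x' : Fin d' → G) (hx' : ∀ i, P (x' i) = t' i)
    (H : Subgroup G) (hH : H = Z.comap P)
    (hNH : P.ker ≤ H)
    (CIN : Subgroup G)
    (hCIN : CIN = Subgroup.closure
      ({g | ∃ i j : Fin d', ∃ w : G, i < j ∧ g = w * ⁅x' i, x' j⁆ * w⁻¹} ∪
       {g | ∃ (i : Fin d') (y : G), y ∈ P.ker ∧ g = ⁅x' i, y⁆}))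
    [hn1 : (CIN.subgroupOf P.ker).Normal]
    [hn2 : (CIN.subgroupOf H).Normal] :
    ⁅H, H⁆ = CIN ∧
    ∃ (ι : ↥(P.ker) ⧸ CIN.subgroupOf P.ker →* ↥H ⧸ CIN.subgroupOf H)
      (q : ↥H ⧸ CIN.subgroupOf H →* Multiplicative (Fin d → ℤ)),
      (∀ y : ↥(P.ker),
        ι (QuotientGroup.mk y) = QuotientGroup.mk (Subgroup.inclusion hNH y)) ∧
      (∀ h : ↥H, q (QuotientGroup.mk h) = P h) ∧
      Function.Injective ι ∧
      ι.range = q.ker ∧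
      q.range = Z := by
  have hZ : Z = (closure (Set.range x')).map P := by
    have ht'x' : t' = P ∘ x' := funext fun i => (hx' i).symm
    rw [← ht', ht'x', Set.range_comp, MonoidHom.map_closure]
  have hHx' : closure (Set.range x' ∪ P.ker) = H := by
    rw [hH, hZ, MonoidHom.map_closure, comap_closure_image]
  have hCK : CIN ≤ P.ker := hCIN ▸ closure_liftRelators_le_ker P x'
  have : H.Normal := hH ▸ inferInstance
  refine ⟨le_antisymm ?_ ?_, QuotientGroup.quotientMapSubgroupOfOfLe le_rfl hNH,
    QuotientGroup.liftSubgroupOf P H CIN hCK, fun _ => rfl, fun _ => rfl,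
    QuotientGroup.quotientMapSubgroupOfOfLe_injective hNH,
    QuotientGroup.range_quotientMapSubgroupOfOfLe P hNH hCK, ?_⟩
  · exact commutator_le_of_closure_eq hHx'
      (hCIN ▸ commutatorElement_mem_closure_liftRelators P x' habel)
  · exact hCIN ▸ closure_liftRelators_le_commutator P x'
      (fun i => hHx' ▸ subset_closure (Or.inl ⟨i, rfl⟩)) hNH
  · rw [QuotientGroup.range_liftSubgroupOf, hH, map_comap_eq, inf_eq_right, hZ]
    exact map_le_range P _

/-- Let `G` be a group with a surjective homomorphism `P : G → ℤ^d` with abelian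
kernel `N`, let `Z ≤ ℤ^d` be a subgroup free of rank `d'` with basis
`t'_1, …, t'_{d'}`, and let `H = P⁻¹(Z)`, with lifts `x'_i` of the `t'_i`.
Let `C + I·N` be the subgroup of `G` generated by the `Λ_ℤ`-module `C` generated
by the commutators `[x'_i, x'_j]` (`i < j`) — i.e. by all their conjugates,
since the `Λ_ℤ = ℤ[t_1^{±1},…,t_d^{±1}]`-action on the abelian normal subgroup
`N` is by conjugation — together with `I·N`, generated by the elements
`(t'_i − 1)·y = [x'_i, y]` for `y ∈ N`.  Then `[H, H] = C + I·N`, and there is a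
short exact sequence `0 → N/(C + IN) → H^{ab} → ℤ^{d'} → 0`: the natural map
`ι : N/(C+IN) → H/(C+IN) = H^{ab}` is injective and its image is the kernel of
the map `q : H^{ab} → ℤ^d` induced by `P`, whose image is `Z ≅ ℤ^{d'}`. -/
theorem stmt_10 {G : Type*} [Group G] {d d' : ℕ}
    (P : G →* Multiplicative (Fin d → ℤ)) (hsurj : Function.Surjective P)
    (habel : ∀ a ∈ P.ker, ∀ b ∈ P.ker, a * b = b * a)
    (Z : Subgroup (Multiplicative (Fin d → ℤ)))
    (t' : Fin d' → Multiplicative (Fin d → ℤ))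
    (ht' : Subgroup.closure (Set.range t') = Z)
    (hind : ∀ c : Fin d' → ℤ, (∏ i, t' i ^ c i) = 1 → c = 0)
    (x' : Fin d' → G) (hx' : ∀ i, P (x' i) = t' i)
    (H : Subgroup G) (hH : H = Z.comap P)
    (hNH : P.ker ≤ H)
    (CIN : Subgroup G)
    (hCIN : CIN = Subgroup.closure
      ({g | ∃ i j : Fin d', ∃ w : G, i < j ∧ g = w * ⁅x' i, x' j⁆ * w⁻¹} ∪
       {g | ∃ (i : Fin d') (y : G), y ∈ P.ker ∧ g = ⁅x' i, y⁆}))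
    [hn1 : (CIN.subgroupOf P.ker).Normal]
    [hn2 : (CIN.subgroupOf H).Normal] :
    ⁅H, H⁆ = CIN ∧
    ∃ (ι : ↥(P.ker) ⧸ CIN.subgroupOf P.ker →* ↥H ⧸ CIN.subgroupOf H)
      (q : ↥H ⧸ CIN.subgroupOf H →* Multiplicative (Fin d → ℤ)),
      (∀ y : ↥(P.ker),
        ι (QuotientGroup.mk y) = QuotientGroup.mk (Subgroup.inclusion hNH y)) ∧
      (∀ h : ↥H, q (QuotientGroup.mk h) = P h) ∧
      Function.Injective ι ∧
      ι.range = q.ker ∧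
      q.range = Z :=
  stmt_10_general P habel Z t' ht' x' hx' H hH hNH CIN hCIN (hn1 := hn1) (hn2 := hn2)
end

section
/- Let Λ = ℤ_p[[T_1,…,T_d]] with d ≥ 1, n ≥ 1, and for each i let f_i be either ω_{p^n}(T_i) = (1+T_i)^{p^n} − 1 or ν_{p^n}(T_i) = ω_{p^n}(T_i)/T_i. Then the natural map Λ/(ω_{p^n}(T_1), f_2, …, f_d) → Λ/(T_1, f_2, …, f_d) ⊕ Λ/(ν_{p^n}(T_1), f_2, …, f_d) is injective. -/
/-
Write `ω = T₁ ν` and `K = (T₁, f₂, …, f_d)`. If `z ∈ (T₁, f) ∩ (ν, f)`, then `z = ν c + (f-part)`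
with `ν c ∈ K`, and since `ν ≡ p^n (mod T₁)` also `p^n c ∈ K`. Modulo `p` each generator of `K`
becomes a power of its own variable (`ω ↦ T^{p^n}`, `ν ↦ T^{p^n-1}`), and multiplying by a power
of one variable is injective modulo a monomial ideal in the others; lifting this one generator at
a time shows that `p` is a nonzerodivisor modulo `K`. So `c ∈ K`, and `z ∈ ν K + (f) ⊆ (ω, f)`.
-/

/-- The polynomial `ν_N(T) = ((1+T)^N − 1)/T = ∑_{k=0}^{N-1} C(N, k+1) T^k`
(over `ℤ`). -/
noncomputable def nuPoly (N : ℕ) : Polynomial ℤ :=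
  ∑ k ∈ Finset.range N, Polynomial.C (N.choose (k + 1) : ℤ) * Polynomial.X ^ k

/-- `ω_{p^n}(T_i) = (1 + T_i)^{p^n} − 1` in `Λ = ℤ_p[[T_1, …, T_d]]`. -/
noncomputable def omegaElt (p : ℕ) [Fact p.Prime] (d n : ℕ) (i : Fin d) :
    MvPowerSeries (Fin d) ℤ_[p] :=
  (1 + MvPowerSeries.X i) ^ (p ^ n) - 1

/-- `ν_{p^n}(T_i) = ((1 + T_i)^{p^n} − 1)/T_i` in `Λ = ℤ_p[[T_1, …, T_d]]`. -/
noncomputable def nuElt (p : ℕ) [Fact p.Prime] (d n : ℕ) (i : Fin d) :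
    MvPowerSeries (Fin d) ℤ_[p] :=
  Polynomial.aeval (MvPowerSeries.X i) (nuPoly (p ^ n))

open Function Finsupp
open scoped nonZeroDivisors

theorem Set.image_univ_update {ι α : Type*} [DecidableEq ι] (f : ι → α) (i : ι) (a : α) :
    update f i a '' Set.univ = insert a (f '' {j | j ≠ i}) := by
  ext x
  simp only [Set.mem_image, Set.mem_univ, true_and, Set.mem_insert_iff, Set.mem_ofPred_eq]
  constructor
  · rintro ⟨j, rfl⟩
    rcases eq_or_ne j i with rfl | hj
    exacts [Or.inl (update_self ..), Or.inr ⟨j, hj, (update_of_ne hj ..).symm⟩]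
  · rintro (rfl | ⟨j, hj, rfl⟩)
    exacts [⟨i, update_self ..⟩, ⟨j, update_of_ne hj ..⟩]

namespace Ideal

theorem mem_of_pow_mul_mem {A : Type*} [CommSemiring A] {I : Ideal A} {a : A}
    (ha : ∀ c, a * c ∈ I → c ∈ I) (k : ℕ) {c : A} (hc : a ^ k * c ∈ I) : c ∈ I := by
  induction k generalizing c with
  | zero => simpa using hc
  | succ k ih => exact ha c (ih (by rwa [pow_succ, mul_assoc] at hc))

variable {A : Type*} [CommRing A]

theorem inf_le_span_singleton_mul_sup (J : Ideal A) {t ν : A}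
    (hν : ∀ c, ν * c ∈ span {t} ⊔ J → c ∈ span {t} ⊔ J) :
    (span {t} ⊔ J) ⊓ (span {ν} ⊔ J) ≤ span {t * ν} ⊔ J := by
  rintro z ⟨hzt, hzν⟩
  obtain ⟨y, hy, a, ha, rfl⟩ := Submodule.mem_sup.mp hzν
  obtain ⟨c, rfl⟩ := mem_span_singleton'.mp hy
  have hc : ν * c ∈ span {t} ⊔ J := by
    simpa [mul_comm] using sub_mem hzt (mem_sup_right ha)
  obtain ⟨y', hy', a', ha', rfl⟩ := Submodule.mem_sup.mp (hν c hc)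
  obtain ⟨e, rfl⟩ := mem_span_singleton'.mp hy'
  refine Submodule.mem_sup.mpr ⟨e * (t * ν), mem_span_singleton'.mpr ⟨e, rfl⟩, ν * a' + a,
    add_mem (mul_mem_left _ _ ha') ha, by ring⟩

theorem injective_quotient_factor_prod {I J K : Ideal A} (hJ : I ≤ J) (hK : I ≤ K)
    (h : J ⊓ K ≤ I) :
    Injective fun a : A ⧸ I => (Quotient.factor hJ a, Quotient.factor hK a) := by
  intro a b hab
  obtain ⟨x, rfl⟩ := Quotient.mk_surjective a
  obtain ⟨y, rfl⟩ := Quotient.mk_surjective b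
  simp only [Quotient.factor_mk, Prod.mk.injEq, Quotient.eq] at hab
  exact Quotient.eq.mpr (h hab)

end Ideal

namespace MvPowerSeries

variable {σ R : Type*}

section Semiring

variable [Semiring R]

noncomputable def divXPow (j : σ) (M : ℕ) : MvPowerSeries σ R →+ MvPowerSeries σ R where
  toFun F := fun e => coeff (e + single j M) F
  map_zero' := funext fun _ => map_zero _
  map_add' F G := funext fun _ => map_add _ F G

theorem coeff_divXPow (j : σ) (M : ℕ) (F : MvPowerSeries σ R) (e : σ →₀ ℕ) :
    coeff e (divXPow j M F) = coeff (e + single j M) F :=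
  rfl

theorem divXPow_X_pow_mul (j : σ) (M : ℕ) (F : MvPowerSeries σ R) :
    divXPow j M (X j ^ M * F) = F := by
  ext e
  rw [coeff_divXPow, X_pow_eq, coeff_monomial_mul, if_pos le_add_self, add_tsub_cancel_right,
    one_mul]

theorem divXPow_mul_X_pow {i j : σ} (hij : i ≠ j) (M m : ℕ) (F : MvPowerSeries σ R) :
    divXPow j M (F * X i ^ m) = divXPow j M F * X i ^ m := by
  ext e
  simp only [coeff_divXPow, X_pow_eq, coeff_mul_monomial, single_le_iff, Finsupp.add_apply,
    single_eq_of_ne hij, add_zero]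
  split_ifs with h
  · rw [tsub_add_eq_add_tsub (single_le_iff.mpr h)]
  · rfl

end Semiring

section CommSemiring

variable [CommSemiring R]

theorem mem_span_X_pow_of_X_pow_mul_mem {S : Set σ} {j : σ} (hj : j ∉ S) (m : σ → ℕ) {M : ℕ}
    {F : MvPowerSeries σ R} (h : X j ^ M * F ∈ Ideal.span ((fun i => X i ^ m i) '' S)) :
    F ∈ Ideal.span ((fun i => X i ^ m i) '' S) := by
  suffices H : ∀ y ∈ Ideal.span ((fun i => X i ^ m i) '' S), ∀ a : MvPowerSeries σ R,
      divXPow j M (a * y) ∈ Ideal.span ((fun i => X i ^ m i) '' S) by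
    simpa [divXPow_X_pow_mul] using H _ h 1
  intro y hy
  induction hy using Submodule.span_induction with
  | mem _ hx =>
    obtain ⟨i, hi, rfl⟩ := hx
    intro a
    rw [divXPow_mul_X_pow (ne_of_mem_of_not_mem hi hj)]
    exact Ideal.mul_mem_left _ _ (Ideal.subset_span ⟨i, hi, rfl⟩)
  | zero => simp
  | add _ _ _ _ hx hy => intro a; rw [mul_add, map_add]; exact add_mem (hx a) (hy a)
  | smul b _ _ hx => intro a; rw [smul_eq_mul, ← mul_assoc]; exact hx _

end CommSemiring

theorem map_surjective [Semiring R] {k : Type*} [Semiring k] {φ : R →+* k}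
    (hφ : Surjective φ) : Surjective (map (σ := σ) φ) := by
  intro G
  refine ⟨fun e => surjInv hφ (coeff e G), ?_⟩
  ext e
  exact surjInv_eq hφ _

theorem C_dvd_of_map_eq_zero [CommSemiring R] {k : Type*} [Semiring k] {φ : R →+* k} {π : R}
    (hker : RingHom.ker φ = Ideal.span {π}) {F : MvPowerSeries σ R} (hF : map φ F = 0) :
    C π ∣ F := by
  have hdvd : ∀ e, π ∣ coeff e F := fun e => by
    rw [← Ideal.mem_span_singleton, ← hker, RingHom.mem_ker, ← coeff_map, hF, map_zero]
  obtain ⟨G, hG⟩ : ∃ G : MvPowerSeries σ R, ∀ e, coeff e F = π * coeff e G :=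
    ⟨fun e => (hdvd e).choose, fun e => (hdvd e).choose_spec⟩
  exact ⟨G, ext fun e => by rw [coeff_C_mul, hG]⟩

variable [CommRing R] {k : Type*} [CommRing k] {φ : R →+* k} {π : R}

theorem exists_C_mul_sub_mem_span (hφ : Surjective φ) (hker : RingHom.ker φ = Ideal.span {π})
    {g : σ → MvPowerSeries σ R} {m : σ → ℕ} {S : Set σ} (hm : ∀ i ∈ S, map φ (g i) = X i ^ m i)
    {j : σ} (hj : j ∉ S) {M : ℕ} (hgj : map φ (g j) = X j ^ M) {c : MvPowerSeries σ R}
    (hc : C π * c ∈ Ideal.span {g j} ⊔ Ideal.span (g '' S)) :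
    ∃ H, C π * (c - g j * H) ∈ Ideal.span (g '' S) := by
  -- Write `C π * c = a * g j + s`; modulo `π` the cofactor `a` falls into the monomial ideal of
  -- the other generators, so `a = b + π H` with `b ∈ (g '' S)`.
  have hmap : Ideal.map (map φ) (Ideal.span (g '' S)) =
      Ideal.span ((fun i => X i ^ m i) '' S) := by
    rw [Ideal.map_span, Set.image_image]
    exact congrArg _ (Set.image_congr hm)
  obtain ⟨_, ha, s, hs, hcas⟩ := Submodule.mem_sup.mp hc
  obtain ⟨a, rfl⟩ := Ideal.mem_span_singleton'.mp ha
  have hπ0 : φ π = 0 := by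
    rw [← RingHom.mem_ker, hker]
    exact Ideal.mem_span_singleton_self π
  have hred : X j ^ M * map φ a ∈ Ideal.span ((fun i => X i ^ m i) '' S) := by
    have := congrArg (map φ) hcas
    rw [map_add, map_mul, map_mul, hgj, map_C, hπ0, map_zero, zero_mul,
      add_eq_zero_iff_eq_neg, mul_comm] at this
    rw [this, ← hmap]
    exact neg_mem (Ideal.mem_map_of_mem _ hs)
  obtain ⟨b, hb, hab⟩ := (Ideal.mem_map_iff_of_surjective _ (map_surjective hφ)).mp
    (hmap ▸ mem_span_X_pow_of_X_pow_mul_mem hj m hred)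
  obtain ⟨H, hH⟩ := C_dvd_of_map_eq_zero hker (F := a - b) (by rw [map_sub, hab, sub_self])
  refine ⟨H, ?_⟩
  have : C π * (c - g j * H) = b * g j + s := by linear_combination hH * g j - hcas
  rw [this]
  exact add_mem (Ideal.mul_mem_right _ _ hb) hs

theorem mem_span_of_C_mul_mem_span (hφ : Surjective φ) (hker : RingHom.ker φ = Ideal.span {π})
    (hπ : π ∈ R⁰) {g : σ → MvPowerSeries σ R} (S : Finset σ)
    (hg : ∀ i ∈ S, ∃ m, map φ (g i) = X i ^ m) {c : MvPowerSeries σ R}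
    (hc : C π * c ∈ Ideal.span (g '' S)) : c ∈ Ideal.span (g '' S) := by
  classical
  choose! m hm using hg
  induction S using Finset.induction_on generalizing c with
  | empty =>
    have hπ' : C π ∈ (MvPowerSeries σ R)⁰ := by
      rwa [← monomial_zero_eq_C, monomial_mem_nonzeroDivisors]
    simpa [mul_comm, mul_right_mem_nonZeroDivisors_eq_zero_iff hπ'] using hc
  | insert j S hj ih =>
    have hmS : ∀ i ∈ S, map φ (g i) = X i ^ m i := fun i hi => hm i (by simp [hi])
    rw [Finset.coe_insert, Set.image_insert_eq, Ideal.span_insert] at hc ⊢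
    obtain ⟨H, hH⟩ := exists_C_mul_sub_mem_span hφ hker (m := m) (S := S) hmS (by simpa using hj)
      (hm j (by simp)) hc
    have hgj : g j * H ∈ Ideal.span {g j} :=
      Ideal.mul_mem_right H _ (Ideal.mem_span_singleton_self _)
    simpa using add_mem (Ideal.mem_sup_right (ih hH hmS)) (Ideal.mem_sup_left hgj)

end MvPowerSeries

open Polynomial in
theorem one_add_X_pow_sub_one_eq_X_mul_nuPoly (N : ℕ) :
    (1 + X : ℤ[X]) ^ N - 1 = X * nuPoly N := by
  rw [add_comm, add_pow, Finset.sum_range_succ', nuPoly, Finset.mul_sum]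
  simp only [one_pow, mul_one, pow_zero, Nat.choose_zero_right, Nat.cast_one, add_sub_cancel_right]
  refine Finset.sum_congr rfl fun k _ => ?_
  rw [← C_eq_natCast]
  ring

open Polynomial in
theorem X_dvd_nuPoly_sub (N : ℕ) : X ∣ nuPoly N - C (N : ℤ) := by
  rw [X_dvd_iff, coeff_sub, coeff_C_zero, sub_eq_zero, nuPoly, finsetSum_coeff]
  simp only [coeff_C_mul_X_pow, Finset.sum_ite_eq, Finset.mem_range]
  rcases N with _ | N <;> simp

section Padic

open MvPowerSeries

variable (p : ℕ) [Fact p.Prime] (d n : ℕ) (i : Fin d)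

theorem omegaElt_eq_X_mul_nuElt : omegaElt p d n i = X i * nuElt p d n i := by
  have := congrArg (Polynomial.aeval (X i : MvPowerSeries (Fin d) ℤ_[p]))
    (one_add_X_pow_sub_one_eq_X_mul_nuPoly (p ^ n))
  simpa [omegaElt, nuElt] using this

theorem X_dvd_nuElt_sub : X i ∣ nuElt p d n i - C ((p : ℤ_[p]) ^ n) := by
  simpa [nuElt] using map_dvd (Polynomial.aeval (X i : MvPowerSeries (Fin d) ℤ_[p]))
    (X_dvd_nuPoly_sub (p ^ n))

theorem map_toZMod_omegaElt : map PadicInt.toZMod (omegaElt p d n i) = X i ^ p ^ n := by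
  have := charP_of_injective_algebraMap' (ZMod p) (A := MvPowerSeries (Fin d) (ZMod p)) p
  simp [omegaElt, add_pow_char_pow]

theorem map_toZMod_nuElt : map PadicInt.toZMod (nuElt p d n i) = X i ^ (p ^ n - 1) := by
  have hX : (X i : MvPowerSeries (Fin d) (ZMod p)) ∈ _ := X_mem_nonzeroDivisors
  rw [← mul_cancel_left_mem_nonZeroDivisors hX, ← pow_succ',
    Nat.sub_add_cancel (Nat.one_le_pow _ _ (Fact.out : p.Prime).pos), ← map_toZMod_omegaElt,
    omegaElt_eq_X_mul_nuElt, map_mul, map_X]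

end Padic

open MvPowerSeries

theorem stmt_12_general (p : ℕ) [Fact p.Prime] (d : ℕ) (n : ℕ)
    (f : Fin (d + 1) → MvPowerSeries (Fin (d + 1)) ℤ_[p])
    (hf : ∀ i : Fin (d + 1), i ≠ 0 →
      f i = omegaElt p (d + 1) n i ∨ f i = nuElt p (d + 1) n i)
    (h12 : Ideal.span ({omegaElt p (d + 1) n 0} ∪ (f '' {i | i ≠ 0}))
      ≤ Ideal.span ({MvPowerSeries.X 0} ∪ (f '' {i | i ≠ 0})))
    (h13 : Ideal.span ({omegaElt p (d + 1) n 0} ∪ (f '' {i | i ≠ 0}))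
      ≤ Ideal.span ({nuElt p (d + 1) n 0} ∪ (f '' {i | i ≠ 0}))) :
    Function.Injective
      (fun a : MvPowerSeries (Fin (d + 1)) ℤ_[p] ⧸
          Ideal.span ({omegaElt p (d + 1) n 0} ∪ (f '' {i | i ≠ 0})) =>
        (Ideal.Quotient.factor h12 a, Ideal.Quotient.factor h13 a)) := by
  classical
  have hK : Ideal.span (update f 0 (X 0) '' (Finset.univ : Finset (Fin (d + 1)))) =
      Ideal.span {X 0} ⊔ Ideal.span (f '' {i | i ≠ 0}) := by
    rw [Finset.coe_univ, Set.image_univ_update, Ideal.span_insert]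
  set K := Ideal.span {X 0} ⊔ Ideal.span (f '' {i | i ≠ 0})
  have hp : ∀ c, C (p : ℤ_[p]) * c ∈ K → c ∈ K := by
    rw [← hK]
    intro c
    refine mem_span_of_C_mul_mem_span (ZMod.ringHom_surjective PadicInt.toZMod)
      (by rw [PadicInt.ker_toZMod, PadicInt.maximalIdeal_eq_span_p])
      (mem_nonZeroDivisors_of_ne_zero (by exact_mod_cast (Fact.out : p.Prime).ne_zero)) _
      (fun i _ => ?_)
    rcases eq_or_ne i 0 with rfl | hi
    · exact ⟨1, by simp⟩
    · rw [update_of_ne hi]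
      rcases hf i hi with h | h <;> rw [h]
      exacts [⟨_, map_toZMod_omegaElt ..⟩, ⟨_, map_toZMod_nuElt ..⟩]
  have hν : ∀ c, nuElt p (d + 1) n 0 * c ∈ K → c ∈ K := by
    intro c hc
    obtain ⟨w, hw⟩ := X_dvd_nuElt_sub p (d + 1) n 0
    refine Ideal.mem_of_pow_mul_mem hp n ?_
    have hpc : C (p : ℤ_[p]) ^ n * c = nuElt p (d + 1) n 0 * c - X 0 * (w * c) := by
      rw [← map_pow]
      linear_combination -c * hw
    rw [hpc]
    exact sub_mem hc
      (Ideal.mem_sup_left (Ideal.mul_mem_right _ _ (Ideal.mem_span_singleton_self _)))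
  refine Ideal.injective_quotient_factor_prod h12 h13 ?_
  rw [Ideal.span_union, Ideal.span_union, Ideal.span_union, omegaElt_eq_X_mul_nuElt]
  exact Ideal.inf_le_span_singleton_mul_sup _ hν

/-- Let `Λ = ℤ_p[[T_1,…,T_d]]` with `d ≥ 1` (here `d + 1` variables indexed by
`Fin (d+1)`), `n ≥ 1`, and for each `i ≠ 0` let `f i` be either
`ω_{p^n}(T_i) = (1+T_i)^{p^n} − 1` or `ν_{p^n}(T_i) = ω_{p^n}(T_i)/T_i`.  Then the
natural map
`Λ/(ω_{p^n}(T_1), f_2, …, f_d) → Λ/(T_1, f_2, …, f_d) ⊕ Λ/(ν_{p^n}(T_1), f_2, …, f_d)`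
is injective. -/
theorem stmt_12 (p : ℕ) [Fact p.Prime] (d : ℕ) (n : ℕ) (hn : 1 ≤ n)
    (f : Fin (d + 1) → MvPowerSeries (Fin (d + 1)) ℤ_[p])
    (hf : ∀ i : Fin (d + 1), i ≠ 0 →
      f i = omegaElt p (d + 1) n i ∨ f i = nuElt p (d + 1) n i)
    (h12 : Ideal.span ({omegaElt p (d + 1) n 0} ∪ (f '' {i | i ≠ 0}))
      ≤ Ideal.span ({MvPowerSeries.X 0} ∪ (f '' {i | i ≠ 0})))
    (h13 : Ideal.span ({omegaElt p (d + 1) n 0} ∪ (f '' {i | i ≠ 0}))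
      ≤ Ideal.span ({nuElt p (d + 1) n 0} ∪ (f '' {i | i ≠ 0}))) :
    Function.Injective
      (fun a : MvPowerSeries (Fin (d + 1)) ℤ_[p] ⧸
          Ideal.span ({omegaElt p (d + 1) n 0} ∪ (f '' {i | i ≠ 0})) =>
        (Ideal.Quotient.factor h12 a, Ideal.Quotient.factor h13 a)) :=
  stmt_12_general p d n f hf h12 h13
end

section
/- Let p be a prime, n ≥ 0, and ω a primitive cube root of unity. Then ∏_{ξ^{p^n}=1} (x^2 ξ^2 + x ξ + 1) = ∏_{κ=0}^{n} Φ_{3p^κ}(x) as polynomials, where the product on the left is over all p^n-th roots of unity ξ and Φ_k denotes the k-th cyclotomic polynomial; equivalently, Res(y^{p^n} − 1, Δ(x,y)) = ∏_{κ=0}^{n} Φ_{3p^κ}(x) for Δ(x,y) = x^2y^2 + xy + 1. Assume p ≠ 3. -/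
/-!
For `ξ` a root of unity, `(ξ²x² + ξx + 1)(1 - ξx) = 1 - ξ³x³`. Taking the product over all
`m`-th roots of unity, `∏ (1 - ξx) = 1 - x^m`, and when `3` is prime to `m` the map `ξ ↦ ξ³`
permutes the `m`-th roots of unity, so `∏ (1 - ξ³x³) = 1 - x^{3m}`. Hence the product is
`(x^{3m} - 1)/(x^m - 1)`, which for `m = p^n` is the product of the `Φ_d` with
`d ∣ 3p^n`, `d ∤ p^n`, i.e. `d = 3p^κ`.
-/

open Polynomial Finset

section RootsOfUnity

variable {K : Type*} [Field K] {m k : ℕ}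

lemma pow_mem_nthRootsFinset_one (hm : 0 < m) {ξ : K} (hξ : ξ ∈ nthRootsFinset m (1 : K)) :
    ξ ^ k ∈ nthRootsFinset m (1 : K) := by
  rw [mem_nthRootsFinset hm] at hξ ⊢
  rw [← pow_mul, mul_comm, pow_mul, hξ, one_pow]

lemma injOn_pow_nthRootsFinset_one (hm : 0 < m) (hmk : m.Coprime k) :
    Set.InjOn (· ^ k) (nthRootsFinset m (1 : K) : Set K) := by
  intro ξ hξ η hη (hξη : ξ ^ k = η ^ k)
  have hη0 : η ≠ 0 := ne_zero_of_mem_nthRootsFinset one_ne_zero hη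
  rw [mem_coe, mem_nthRootsFinset hm] at hξ hη
  have hk : (ξ / η) ^ k = 1 := by rw [div_pow, hξη, div_self (pow_ne_zero k hη0)]
  have hm1 : (ξ / η) ^ m = 1 := by rw [div_pow, hξ, hη, div_one]
  have h1 : (ξ / η) ^ m.gcd k = 1 := pow_gcd_eq_one.2 ⟨hm1, hk⟩
  rwa [hmk.gcd_eq_one, pow_one, div_eq_one_iff_eq hη0] at h1

lemma image_pow_nthRootsFinset_one [DecidableEq K] (hm : 0 < m) (hmk : m.Coprime k) :
    (nthRootsFinset m (1 : K)).image (· ^ k) = nthRootsFinset m (1 : K) := by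
  refine eq_of_subset_of_card_le ?_ ?_
  · exact image_subset_iff.2 fun ξ hξ => pow_mem_nthRootsFinset_one hm hξ
  · rw [card_image_of_injOn (injOn_pow_nthRootsFinset_one hm hmk)]

lemma prod_nthRootsFinset_one_comp_pow {M : Type*} [CommMonoid M] (f : K → M) (hm : 0 < m)
    (hmk : m.Coprime k) :
    ∏ ξ ∈ nthRootsFinset m (1 : K), f (ξ ^ k) = ∏ ξ ∈ nthRootsFinset m (1 : K), f ξ := by
  classical
  conv_rhs => rw [← image_pow_nthRootsFinset_one hm hmk]
  rw [prod_image (injOn_pow_nthRootsFinset_one hm hmk)]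

lemma prod_nthRootsFinset_one_sq_add_add_one_mul_one_sub_pow {ζ : K} (hζ : IsPrimitiveRoot ζ m)
    (hm : 0 < m) (hm3 : m.Coprime 3) (z : K) :
    (∏ ξ ∈ nthRootsFinset m (1 : K), (ξ ^ 2 * z ^ 2 + ξ * z + 1)) * (1 - z ^ m)
      = 1 - (z ^ 3) ^ m := by
  have hz := hζ.pow_sub_pow_eq_prod_sub_mul 1 z hm
  have hz3 := hζ.pow_sub_pow_eq_prod_sub_mul 1 (z ^ 3) hm
  rw [one_pow] at hz hz3
  rw [hz, hz3, ← prod_mul_distrib,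
    ← prod_nthRootsFinset_one_comp_pow (fun ξ => 1 - ξ * z ^ 3) hm hm3]
  exact prod_congr rfl fun ξ _ => by ring

lemma prod_nthRootsFinset_one_mul_one_sub_X_pow [Infinite K] {ζ : K} (hζ : IsPrimitiveRoot ζ m)
    (hm : 0 < m) (hm3 : m.Coprime 3) :
    (∏ ξ ∈ nthRootsFinset m (1 : K), (C (ξ ^ 2) * X ^ 2 + C ξ * X + 1)) * (1 - X ^ m)
      = 1 - X ^ (3 * m) := by
  refine Polynomial.funext fun z => ?_
  simpa [eval_prod, pow_mul] using
    prod_nthRootsFinset_one_sq_add_add_one_mul_one_sub_pow hζ hm hm3 z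

end RootsOfUnity

lemma divisors_prime_mul_prime_pow_sdiff {ℓ p : ℕ} (hℓ : ℓ.Prime) (hp : p.Prime) (hℓp : ℓ ≠ p)
    (n : ℕ) :
    (ℓ * p ^ n).divisors \ (p ^ n).divisors = (range (n + 1)).image (ℓ * p ^ ·) := by
  have hpn : p ^ n ≠ 0 := pow_ne_zero n hp.ne_zero
  have hℓpn : ¬ ℓ ∣ p ^ n := fun h =>
    hℓp ((Nat.prime_dvd_prime_iff_eq hℓ hp).1 (hℓ.dvd_of_dvd_pow h))
  ext d
  simp only [mem_sdiff, Nat.mem_divisors, mem_image, mem_range]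
  constructor
  · rintro ⟨⟨hd, -⟩, hnd⟩
    obtain ⟨a, b, ha, hb, rfl⟩ := exists_dvd_and_dvd_of_dvd_mul hd
    rcases hℓ.eq_one_or_self_of_dvd a ha with rfl | rfl
    · exact absurd ⟨by simpa using hb, hpn⟩ hnd
    · obtain ⟨κ, hκ, rfl⟩ := (Nat.dvd_prime_pow hp).1 hb
      exact ⟨κ, Nat.lt_succ_of_le hκ, rfl⟩
  · rintro ⟨κ, hκ, rfl⟩
    refine ⟨⟨Nat.mul_dvd_mul_left ℓ (pow_dvd_pow p (Nat.lt_succ_iff.1 hκ)),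
      mul_ne_zero hℓ.ne_zero hpn⟩, fun ⟨hd, _⟩ => hℓpn (dvd_trans (Dvd.intro _ rfl) hd)⟩

lemma X_pow_sub_one_mul_prod_cyclotomic_prime_mul_prime_pow (R : Type*) [CommRing R] {ℓ p : ℕ}
    (hℓ : ℓ.Prime) (hp : p.Prime) (hℓp : ℓ ≠ p) (n : ℕ) :
    (X ^ p ^ n - 1) * ∏ κ ∈ range (n + 1), cyclotomic (ℓ * p ^ κ) R = X ^ (ℓ * p ^ n) - 1 := by
  have hinj : Set.InjOn (ℓ * p ^ ·) (range (n + 1) : Set ℕ) := fun a _ b _ hab =>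
    Nat.pow_right_injective hp.two_le (Nat.eq_of_mul_eq_mul_left hℓ.pos hab)
  rw [← prod_image (f := (cyclotomic · R)) hinj, ← divisors_prime_mul_prime_pow_sdiff hℓ hp hℓp n]
  exact X_pow_sub_one_mul_prod_cyclotomic_eq_X_pow_sub_one_of_dvd R (dvd_mul_left _ _)
    (mul_ne_zero hℓ.ne_zero (pow_ne_zero n hp.ne_zero))

/-- Let `p ≠ 3` be a prime and `n ≥ 0`.  Then
`∏_{ξ^{p^n} = 1} (x² ξ² + x ξ + 1) = ∏_{κ=0}^{n} Φ_{3p^κ}(x)` as polynomials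
(over `ℂ`), where the left product is over all `p^n`-th roots of unity `ξ` and
`Φ_k` denotes the `k`-th cyclotomic polynomial.  Equivalently,
`Res(y^{p^n} − 1, Δ(x,y)) = ∏_{κ=0}^{n} Φ_{3p^κ}(x)` for
`Δ(x,y) = x²y² + xy + 1`. -/
theorem stmt_15 (p : ℕ) (hp : p.Prime) (hp3 : p ≠ 3) (n : ℕ) :
    ∏ ξ ∈ (Polynomial.nthRoots (p ^ n) (1 : ℂ)).toFinset,
        (Polynomial.C (ξ ^ 2) * Polynomial.X ^ 2 + Polynomial.C ξ * Polynomial.X + 1)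
      = ∏ κ ∈ Finset.range (n + 1), Polynomial.cyclotomic (3 * p ^ κ) ℂ := by
  have hm : 0 < p ^ n := pow_pos hp.pos n
  have hm3 : (p ^ n).Coprime 3 :=
    ((Nat.coprime_primes hp Nat.prime_three).2 hp3).pow_left n
  have hX : (1 - X ^ p ^ n : ℂ[X]) ≠ 0 := by
    rw [← neg_sub]
    exact neg_ne_zero.2 (by simpa using X_pow_sub_C_ne_zero hm (1 : ℂ))
  rw [← nthRootsFinset_def]
  refine mul_right_cancel₀ hX ?_
  rw [prod_nthRootsFinset_one_mul_one_sub_X_pow (Complex.isPrimitiveRoot_exp _ hm.ne') hm hm3,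
    ← neg_sub, ← neg_sub (X ^ p ^ n), mul_neg, mul_comm _ (X ^ p ^ n - 1),
    X_pow_sub_one_mul_prod_cyclotomic_prime_mul_prime_pow ℂ Nat.prime_three hp hp3.symm]
end

section
/- Let p ≠ 3 be a prime. Then ∏_{ζ_1, ζ_2} Δ(ζ_1, ζ_2) = ±3^{p^n − 1}, where Δ(x,y) = x^2 y^2 + xy + 1 and the product runs over all pairs (ζ_1, ζ_2) of p^n-th roots of unity with ζ_1 ≠ 1 and ζ_2 ≠ 1. In particular its absolute value is 3^{p^n − 1}. -/
/-!
For `3 ∤ N`, cubing permutes the nontrivial `N`-th roots of unity, so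
`∏_{ζ ≠ 1} (ζ³ - 1) = ∏_{ζ ≠ 1} (ζ - 1)`; dividing, `∏_{ζ ≠ 1} Φ₃(ζ) = 1`, and hence
`∏_ζ Φ₃(ζ) = Φ₃(1) = 3`. Since `Δ(x, y) = Φ₃(xy)` and multiplication by `ζ₁` permutes the
`N`-th roots of unity, the inner product over all `ζ₂` is again `3`, so the inner product over
`ζ₂ ≠ 1` is `3 / Φ₃(ζ₁)`. Multiplying over `ζ₁ ≠ 1` gives `3^(N-1)` exactly.
-/

open Polynomial Finset

theorem Finset.prod_comp_eq_of_mapsTo_of_injOn {α M : Type*} [CommMonoid M] {s : Finset α}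
    {e : α → α} (hmaps : Set.MapsTo e s s) (hinj : Set.InjOn e s) (f : α → M) :
    ∏ x ∈ s, f (e x) = ∏ x ∈ s, f x :=
  prod_nbij e hmaps hinj (surjOn_of_injOn_of_card_le e hmaps hinj le_rfl) fun _ _ ↦ rfl

theorem prod_nthRootsFinset_mul_left {R M : Type*} [CommRing R] [IsDomain R] [CommMonoid M]
    {N : ℕ} {c : R} (hc : c ∈ nthRootsFinset N (1 : R)) (f : R → M) :
    ∏ ζ ∈ nthRootsFinset N (1 : R), f (c * ζ) = ∏ ζ ∈ nthRootsFinset N (1 : R), f ζ := by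
  refine prod_comp_eq_of_mapsTo_of_injOn (fun ζ hζ ↦ ?_) (fun ζ _ η _ h ↦ ?_) f
  · simpa using mul_mem_nthRootsFinset hc hζ
  · exact mul_left_cancel₀ (ne_zero_of_mem_nthRootsFinset one_ne_zero hc) h

section Field

variable {K : Type*} [Field K] {N k : ℕ}

theorem pow_injOn_nthRootsFinset (hk : k.Coprime N) :
    Set.InjOn (· ^ k) (nthRootsFinset N (1 : K) : Set K) := by
  rcases N.eq_zero_or_pos with rfl | hN
  · simp
  intro ζ hζ η hη h
  have hη0 := ne_zero_of_mem_nthRootsFinset one_ne_zero hη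
  rw [mem_coe, mem_nthRootsFinset hN] at hζ hη
  rw [← div_eq_one_iff_eq hη0, ← pow_eq_one_iff_of_coprime hk]
  simp [div_pow, h, hζ, hη, hη0]

variable [DecidableEq K]

theorem prod_nthRootsFinset_erase_one_pow {M : Type*} [CommMonoid M] (hk : k.Coprime N)
    (f : K → M) :
    ∏ ζ ∈ (nthRootsFinset N (1 : K)).erase 1, f (ζ ^ k) =
      ∏ ζ ∈ (nthRootsFinset N (1 : K)).erase 1, f ζ := by
  rcases N.eq_zero_or_pos with rfl | hN
  · simp
  have hinj := pow_injOn_nthRootsFinset (K := K) hk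
  refine prod_comp_eq_of_mapsTo_of_injOn (fun ζ hζ ↦ ?_)
    (hinj.mono (coe_subset.2 (erase_subset _ _))) f
  obtain ⟨hζ1, hζ⟩ := mem_erase.1 hζ
  have hζk : ζ ^ k ∈ nthRootsFinset N (1 : K) := by
    rw [mem_nthRootsFinset hN] at hζ ⊢
    rw [← pow_mul, mul_comm, pow_mul, hζ, one_pow]
  refine mem_erase.2 ⟨fun h ↦ hζ1 (hinj hζ (one_mem_nthRootsFinset hN) ?_), hζk⟩
  simpa using h

theorem prod_nthRootsFinset_erase_one_geom_sum (hk : k.Coprime N) :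
    ∏ ζ ∈ (nthRootsFinset N (1 : K)).erase 1, ∑ i ∈ range k, ζ ^ i = 1 := by
  have hne : ∏ ζ ∈ (nthRootsFinset N (1 : K)).erase 1, (ζ - 1) ≠ 0 :=
    prod_ne_zero_iff.2 fun ζ hζ ↦ sub_ne_zero.2 (ne_of_mem_erase hζ)
  refine mul_right_cancel₀ hne ?_
  simp only [← prod_mul_distrib, geom_sum_mul, one_mul]
  exact prod_nthRootsFinset_erase_one_pow hk (· - 1)

theorem prod_erase_one_prod_erase_one_nthRootsFinset (h3 : Nat.Coprime 3 N) :
    ∏ ζ₁ ∈ (nthRootsFinset N (1 : K)).erase 1, ∏ ζ₂ ∈ (nthRootsFinset N (1 : K)).erase 1,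
      (ζ₁ ^ 2 * ζ₂ ^ 2 + ζ₁ * ζ₂ + 1) = 3 ^ (#(nthRootsFinset N (1 : K)) - 1) := by
  set S := nthRootsFinset N (1 : K)
  have hN : 0 < N := Nat.pos_of_ne_zero (by rintro rfl; norm_num at h3)
  have h1 : 1 ∈ S := one_mem_nthRootsFinset hN
  have hΦ : ∏ ζ ∈ S.erase 1, (ζ ^ 2 + ζ + 1) = 1 := by
    have hgeom (ζ : K) : ∑ i ∈ range 3, ζ ^ i = ζ ^ 2 + ζ + 1 := by
      simp only [sum_range_succ, sum_range_zero]; ring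
    simpa only [hgeom] using prod_nthRootsFinset_erase_one_geom_sum (K := K) h3
  have hinner : ∀ ζ₁ ∈ S.erase 1,
      (∏ ζ₂ ∈ S.erase 1, (ζ₁ ^ 2 * ζ₂ ^ 2 + ζ₁ * ζ₂ + 1)) * (ζ₁ ^ 2 + ζ₁ + 1) = 3 := by
    intro ζ₁ hζ₁
    have h := prod_nthRootsFinset_mul_left (mem_of_mem_erase hζ₁) fun z ↦ z ^ 2 + z + 1
    rw [← prod_erase_mul _ _ h1, ← prod_erase_mul _ _ h1, hΦ] at h
    simp only [mul_one, one_pow, mul_pow] at h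
    linear_combination h
  calc _ = (∏ ζ₁ ∈ S.erase 1, ∏ ζ₂ ∈ S.erase 1, (ζ₁ ^ 2 * ζ₂ ^ 2 + ζ₁ * ζ₂ + 1)) *
        ∏ ζ ∈ S.erase 1, (ζ ^ 2 + ζ + 1) := by rw [hΦ, mul_one]
    _ = ∏ _ζ₁ ∈ S.erase 1, (3 : K) := by rw [← prod_mul_distrib]; exact prod_congr rfl hinner
    _ = 3 ^ (#S - 1) := by rw [prod_const, card_erase_of_mem h1]

end Field

/-- Let `p ≠ 3` be a prime.  Then `∏ Δ(ζ₁, ζ₂) = ±3^(p^n − 1)` with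
`Δ(x,y) = x²y² + xy + 1`, the product running over all pairs `(ζ₁, ζ₂)` of
`p^n`-th roots of unity with `ζ₁ ≠ 1` and `ζ₂ ≠ 1`; in particular its absolute
value is `3^(p^n − 1)`. -/
theorem stmt_16 (p : ℕ) (hp : p.Prime) (hp3 : p ≠ 3) (n : ℕ) :
    ‖(∏ ζ₁ ∈ (Polynomial.nthRoots (p ^ n) (1 : ℂ)).toFinset.erase 1,
        ∏ ζ₂ ∈ (Polynomial.nthRoots (p ^ n) (1 : ℂ)).toFinset.erase 1,
          (ζ₁ ^ 2 * ζ₂ ^ 2 + ζ₁ * ζ₂ + 1))‖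
      = (3 : ℝ) ^ (p ^ n - 1) := by
  have h3 : Nat.Coprime 3 (p ^ n) :=
    ((Nat.coprime_primes Nat.prime_three hp).2 hp3.symm).pow_right n
  have hcard := (Complex.isPrimitiveRoot_exp _ (pow_pos hp.pos n).ne').card_nthRootsFinset
  rw [← nthRootsFinset_def, prod_erase_one_prod_erase_one_nthRootsFinset h3, hcard, norm_pow]
  norm_num
end
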